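/- Let M be positive semidefinite, X ∈ ℝ^{n×p} with XᵀMX = I_p, and Y ∈ ℝ^{n×p} with all eigenvalues of YᵀMY in [5/6, 7/6]. Let f be differentiable with sup over the unit ball around X of ‖∇f‖_F at most H, and suppose β ≥ 6H(‖X‖_F + 1). Then f(A(Y)) + (β/4)‖YᵀMY − I_p‖_F² − f(R(Y)) ≥ (β/8)‖YᵀMY − I_p‖_F², where A(Y) := Y((3/2)I_p − (1/2)YᵀMY) and R(Y) := Y(YᵀMY)^{-1/2}, provided ‖Y‖_F ≤ ‖X‖_F + 1 and A(Y), R(Y) lie in the closed unit ball around X. -/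

import Mathlib

open Matrix

attribute [local instance] Matrix.frobeniusNormedAddCommGroup Matrix.frobeniusNormedSpace

/-- The square root of a positive semidefinite matrix, as `Matrix.PosSemidef.sqrt` was defined
in Mathlib (December 2024, where it was stated for any `RCLike` field;
only the real case is needed here); it has since been removed from Mathlib. -/
noncomputable def Matrix.PosSemidef.sqrt {n : Type*} [Fintype n] [DecidableEq n]
    {A : Matrix n n ℝ} (hA : A.PosSemidef) : Matrix n n ℝ :=
  hA.1.eigenvectorUnitary.1 * diagonal ((fun x => Real.sqrt x) ∘ hA.1.eigenvalues) *
    (star hA.1.eigenvectorUnitary : Matrix n n ℝ)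

/-!
Write `S = YᵀMY`. Then `R(Y) − A(Y) = Y·g(S)` with `g(x) = x^{-1/2} − (3/2 − x/2)`, the error of
the tangent line of `x^{-1/2}` at `1`, so `|g(x)| ≤ (3/4)(x − 1)²` for `x ≥ 1/2`. Diagonalising `S`
orthogonally gives `‖g(S)‖_F ≤ (3/4)‖S − I‖_F²`, hence
`‖R(Y) − A(Y)‖_F ≤ (3/4)(‖X‖_F + 1)‖S − I‖_F²`.
The mean value inequality on the ball `𝔹(X,1)` turns this into
`f(R(Y)) − f(A(Y)) ≤ (3/4)H(‖X‖_F + 1)‖S − I‖_F² ≤ (β/8)‖S − I‖_F²`.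
-/

lemma abs_inv_sqrt_sub_tangent_le {x : ℝ} (hx : 1 / 2 ≤ x) :
    |(Real.sqrt x)⁻¹ - (3 / 2 - 1 / 2 * x)| ≤ 3 / 4 * (x - 1) ^ 2 := by
  set t := Real.sqrt x
  have ht : 0 < t := Real.sqrt_pos.mpr (by linarith)
  have htx : t ^ 2 = x := Real.sq_sqrt (by linarith)
  have hhalf : 1 / 2 < t := by nlinarith
  -- with `t = √x`, both sides factor through `(t - 1)²`
  have hfactor : t⁻¹ - (3 / 2 - 1 / 2 * t ^ 2) = (t - 1) ^ 2 * ((t + 2) / (2 * t)) := by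
    field_simp; ring
  have hfrac : (t + 2) / (2 * t) ≤ 3 / 4 * (t + 1) ^ 2 := by
    rw [div_le_iff₀ (by positivity)]; nlinarith
  rw [← htx, hfactor, abs_of_nonneg (by positivity)]
  calc (t - 1) ^ 2 * ((t + 2) / (2 * t)) ≤ (t - 1) ^ 2 * (3 / 4 * (t + 1) ^ 2) := by gcongr
    _ = 3 / 4 * (t ^ 2 - 1) ^ 2 := by ring

namespace Matrix

variable {m n 𝕜 : Type*} [Fintype m] [Fintype n] [RCLike 𝕜]

lemma frobenius_norm_sq_eq_re_trace (A : Matrix m n 𝕜) :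
    ‖A‖ ^ 2 = RCLike.re (Aᴴ * A).trace := by
  rw [frobenius_norm_def, ← Real.rpow_natCast, ← Real.rpow_mul (by positivity)]
  norm_num [trace, mul_apply, Finset.sum_comm (γ := m), RCLike.conj_mul]

lemma frobenius_norm_unitary_mul [DecidableEq m] {U : Matrix m m 𝕜} (hU : U ∈ unitaryGroup m 𝕜)
    (A : Matrix m n 𝕜) : ‖U * A‖ = ‖A‖ := by
  refine (pow_left_inj₀ (norm_nonneg _) (norm_nonneg _) two_ne_zero).mp ?_
  rw [frobenius_norm_sq_eq_re_trace, frobenius_norm_sq_eq_re_trace, conjTranspose_mul,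
    Matrix.mul_assoc, ← Matrix.mul_assoc Uᴴ, ← star_eq_conjTranspose,
    mem_unitaryGroup_iff'.mp hU, Matrix.one_mul]

lemma frobenius_norm_mul_unitary [DecidableEq n] {U : Matrix n n 𝕜} (hU : U ∈ unitaryGroup n 𝕜)
    (A : Matrix m n 𝕜) : ‖A * U‖ = ‖A‖ := by
  rw [← frobenius_norm_conjTranspose, conjTranspose_mul, ← star_eq_conjTranspose,
    frobenius_norm_unitary_mul (Unitary.star_mem hU), frobenius_norm_conjTranspose]

lemma IsHermitian.frobenius_norm_cfc_sq [DecidableEq n] {A : Matrix n n 𝕜} (hA : A.IsHermitian)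
    (f : ℝ → ℝ) : ‖cfc f A‖ ^ 2 = ∑ i, f (hA.eigenvalues i) ^ 2 := by
  rw [hA.cfc_eq, IsHermitian.cfc, Unitary.conjStarAlgAut_apply,
    frobenius_norm_mul_unitary (Unitary.star_mem (SetLike.coe_mem _)),
    frobenius_norm_unitary_mul (SetLike.coe_mem _), frobenius_norm_diagonal,
    EuclideanSpace.norm_eq, Real.sq_sqrt (by positivity)]
  simp

lemma PosSemidef.sqrt_eq_cfc [DecidableEq n] {A : Matrix n n ℝ} (hA : A.PosSemidef) :
    hA.sqrt = cfc Real.sqrt A := by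
  rw [hA.1.cfc_eq]
  rfl

lemma PosSemidef.norm_inv_sqrt_sub_tangent_le [DecidableEq n] {S : Matrix n n ℝ}
    (hS : S.PosSemidef) (hspec : ∀ i, 1 / 2 ≤ hS.1.eigenvalues i) :
    ‖(hS.sqrt)⁻¹ - ((3 / 2 : ℝ) • 1 - (1 / 2 : ℝ) • S)‖ ≤ 3 / 4 * ‖S - 1‖ ^ 2 := by
  have hS_sa : IsSelfAdjoint S := hS.1
  have hcont (g : ℝ → ℝ) : ContinuousOn g (spectrum ℝ S) :=
    finite_real_spectrum.continuousOn g
  have hsqrt_ne : ∀ x ∈ spectrum ℝ S, Real.sqrt x ≠ 0 := by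
    rw [hS.1.spectrum_real_eq_range_eigenvalues]
    rintro _ ⟨i, rfl⟩
    exact (Real.sqrt_pos.mpr (by linarith [hspec i])).ne'
  have hinv : (hS.sqrt)⁻¹ = cfc (fun x => (Real.sqrt x)⁻¹) S := by
    rw [nonsing_inv_eq_ringInverse, hS.sqrt_eq_cfc, cfc_inv _ _ hsqrt_ne (hcont _)]
  have hlin : (3 / 2 : ℝ) • 1 - (1 / 2 : ℝ) • S = cfc (fun x : ℝ => 3 / 2 - 1 / 2 * x) S := by
    rw [cfc_sub _ _ _ (hcont _) (hcont _), cfc_const _ _, cfc_const_mul_id _ _,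
      Algebra.algebraMap_eq_smul_one]
  have hsub : S - 1 = cfc (fun x : ℝ => x - 1) S := by
    rw [cfc_sub _ _ _ (hcont _) (hcont _), cfc_id' ℝ S, cfc_const_one ℝ S]
  rw [hinv, hlin, ← cfc_sub _ _ _ (hcont _) (hcont _), hsub]
  refine (pow_le_pow_iff_left₀ (norm_nonneg _) (by positivity) two_ne_zero).mp ?_
  rw [mul_pow, hS.1.frobenius_norm_cfc_sq, hS.1.frobenius_norm_cfc_sq]
  calc ∑ i, ((Real.sqrt (hS.1.eigenvalues i))⁻¹ - (3 / 2 - 1 / 2 * hS.1.eigenvalues i)) ^ 2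
      ≤ ∑ i, (3 / 4 * (hS.1.eigenvalues i - 1) ^ 2) ^ 2 := by
        refine Finset.sum_le_sum fun i _ => ?_
        obtain ⟨hlo, hhi⟩ := abs_le.mp (abs_inv_sqrt_sub_tangent_le (hspec i))
        exact sq_le_sq' hlo hhi
    _ = (3 / 4) ^ 2 * ∑ i, ((hS.1.eigenvalues i - 1) ^ 2) ^ 2 := by
        rw [Finset.mul_sum]; simp only [mul_pow]
    _ ≤ (3 / 4) ^ 2 * (∑ i, (hS.1.eigenvalues i - 1) ^ 2) ^ 2 := by
        gcongr
        exact Finset.sum_sq_le_sq_sum_of_nonneg fun i _ => sq_nonneg _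

end Matrix

theorem stmt_13_general {n p : ℕ} (M : Matrix (Fin n) (Fin n) ℝ)
    (X Y : Matrix (Fin n) (Fin p) ℝ)
    (hS : (Yᵀ * M * Y).PosSemidef)
    (heig : ∀ i, hS.1.eigenvalues i ∈ Set.Icc (5 / 6 : ℝ) (7 / 6))
    (f : Matrix (Fin n) (Fin p) ℝ → ℝ) (hf : Differentiable ℝ f)
    (H β : ℝ)
    (hH : ∀ Z ∈ Metric.closedBall X 1, @Norm.norm _ ContinuousLinearMap.hasOpNorm (fderiv ℝ f Z) ≤ H)
    (hβ : 6 * H * (‖X‖ + 1) ≤ β)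
    (hY : ‖Y‖ ≤ ‖X‖ + 1)
    (hA : Y * ((3 / 2 : ℝ) • (1 : Matrix (Fin p) (Fin p) ℝ) - (1 / 2 : ℝ) • (Yᵀ * M * Y))
        ∈ Metric.closedBall X 1)
    (hR : Y * (hS.sqrt)⁻¹ ∈ Metric.closedBall X 1) :
    (β / 8) * ‖Yᵀ * M * Y - 1‖ ^ 2
      ≤ f (Y * ((3 / 2 : ℝ) • (1 : Matrix (Fin p) (Fin p) ℝ) - (1 / 2 : ℝ) • (Yᵀ * M * Y)))
        + (β / 4) * ‖Yᵀ * M * Y - 1‖ ^ 2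
        - f (Y * (hS.sqrt)⁻¹) := by
  have hH₀ : 0 ≤ H := (norm_nonneg _).trans (hH X (Metric.mem_closedBall_self zero_le_one))
  have hdist : ‖Y * (hS.sqrt)⁻¹ - Y * ((3 / 2 : ℝ) • 1 - (1 / 2 : ℝ) • (Yᵀ * M * Y))‖
      ≤ (‖X‖ + 1) * (3 / 4 * ‖Yᵀ * M * Y - 1‖ ^ 2) := by
    rw [← Matrix.mul_sub]
    refine (frobenius_norm_mul _ _).trans (mul_le_mul hY ?_ (norm_nonneg _) (by positivity))
    exact hS.norm_inv_sqrt_sub_tangent_le fun i => by linarith [(heig i).1]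
  have hmvt := (convex_closedBall X 1).norm_image_sub_le_of_norm_fderiv_le
    (fun Z _ => hf.differentiableAt) hH hA hR
  have hpen : 0 ≤ ‖Yᵀ * M * Y - 1‖ ^ 2 := by positivity
  have hdecrease : f (Y * (hS.sqrt)⁻¹) - f (Y * ((3 / 2 : ℝ) • 1 - (1 / 2 : ℝ) • (Yᵀ * M * Y)))
      ≤ β / 8 * ‖Yᵀ * M * Y - 1‖ ^ 2 :=
    calc _ ≤ H * ‖Y * (hS.sqrt)⁻¹ - Y * ((3 / 2 : ℝ) • 1 - (1 / 2 : ℝ) • (Yᵀ * M * Y))‖ :=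
          (Real.le_norm_self _).trans hmvt
      _ ≤ H * ((‖X‖ + 1) * (3 / 4 * ‖Yᵀ * M * Y - 1‖ ^ 2)) := by gcongr
      _ ≤ β / 8 * ‖Yᵀ * M * Y - 1‖ ^ 2 := by nlinarith
  linarith

/-- Decrease of the SLEP penalty under generalized orthogonalization: with
`A(Y) := Y((3/2)I − (1/2)YᵀMY)`, `R(Y) := Y(YᵀMY)^{-1/2}`, feasible `X`, eigenvalues of
`YᵀMY` in `[5/6,7/6]`, `sup_{𝔹(X,1)}‖∇f‖_F ≤ H`, `β ≥ 6H(‖X‖_F + 1)`, `‖Y‖_F ≤ ‖X‖_F + 1`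
and `A(Y), R(Y) ∈ 𝔹(X,1)`, one has
`f(A(Y)) + (β/4)‖YᵀMY − I‖_F² − f(R(Y)) ≥ (β/8)‖YᵀMY − I‖_F²`. -/
theorem stmt_13 {n p : ℕ} (M : Matrix (Fin n) (Fin n) ℝ) (hM : M.PosSemidef)
    (X Y : Matrix (Fin n) (Fin p) ℝ)
    (hX : Xᵀ * M * X = 1)
    (hS : (Yᵀ * M * Y).PosSemidef)
    (heig : ∀ i, hS.1.eigenvalues i ∈ Set.Icc (5 / 6 : ℝ) (7 / 6))
    (f : Matrix (Fin n) (Fin p) ℝ → ℝ) (hf : Differentiable ℝ f)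
    (H β : ℝ)
    (hH : ∀ Z ∈ Metric.closedBall X 1, @Norm.norm _ ContinuousLinearMap.hasOpNorm (fderiv ℝ f Z) ≤ H)
    (hβ : 6 * H * (‖X‖ + 1) ≤ β)
    (hY : ‖Y‖ ≤ ‖X‖ + 1)
    (hA : Y * ((3 / 2 : ℝ) • (1 : Matrix (Fin p) (Fin p) ℝ) - (1 / 2 : ℝ) • (Yᵀ * M * Y))
        ∈ Metric.closedBall X 1)
    (hR : Y * (hS.sqrt)⁻¹ ∈ Metric.closedBall X 1) :
    (β / 8) * ‖Yᵀ * M * Y - 1‖ ^ 2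
      ≤ f (Y * ((3 / 2 : ℝ) • (1 : Matrix (Fin p) (Fin p) ℝ) - (1 / 2 : ℝ) • (Yᵀ * M * Y)))
        + (β / 4) * ‖Yᵀ * M * Y - 1‖ ^ 2
        - f (Y * (hS.sqrt)⁻¹) :=
  stmt_13_general M X Y hS heig f hf H β hH hβ hY hA hR
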